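/- arXiv:2303.08392 — 2 statements merged into one kernel-verified Lean document; each statement's English description precedes it below -/
import Mathlib

section
/- Assume J_{x,y} = 0 for all x, y ∈ V, so that H(σ) = -∑_{x∈V} h_x σ_x is subject only to the external fields. Then for every β > 0, the Gibbs distribution π_β^G is stationary for P_β^{DA}, i.e. ∑_{τ∈Ω} π_β^G(τ) P_β^{DA}(τ, σ) = π_β^G(σ) for all σ ∈ Ω. -/
/-!
With no couplings, `E_y(σ) = 2 h_y σ_y` depends only on the spin at `y`, so flipping `x` leaves
every acceptance probability at `y ≠ x` unchanged. Hence `P(σ, σ^x) = e^{-β E_x(σ)^+} R(σ, σ^x)`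
with `R(σ^x, σ) = R(σ, σ^x)`, and Metropolis detailed balance
`π(σ) e^{-β E_x(σ)^+} = π(σ^x) e^{-β E_x(σ^x)^+}` makes `P` reversible for `π`. Stationarity then
follows from the row sums being `1`: a nonempty flip set `S` is counted once for each `x ∈ S`,
which cancels the weight `1/|S|`, and `∑_S ∏_{y ∈ S} a_y ∏_{y ∉ S} (1 - a_y) = ∏_y (a_y + 1 - a_y)`.
-/

open Finset Filter
open scoped Classical

noncomputable section

/-- The real spin value of a Boolean spin: `true ↦ +1`, `false ↦ -1`. -/
def spin (b : Bool) : ℝ := if b then 1 else -1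

variable {V : Type*} [Fintype V] [DecidableEq V]

/-- The configuration obtained from `σ` by flipping the spin at `x`. -/
def flipConf (σ : V → Bool) (x : V) : V → Bool := Function.update σ x (!(σ x))

/-- The Ising Hamiltonian with couplings `J` and external fields `h`. -/
def Ham (J : V → V → ℝ) (h : V → ℝ) (σ : V → Bool) : ℝ :=
  -(1 / 2) * ∑ x : V, ∑ y : V, J x y * spin (σ x) * spin (σ y)
    - ∑ x : V, h x * spin (σ x)

/-- `Ecost J h x σ = H(σ^x) - H(σ)`, the energetic cost of flipping the spin at `x`. -/
def Ecost (J : V → V → ℝ) (h : V → ℝ) (x : V) (σ : V → Bool) : ℝ :=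
  Ham J h (flipConf σ x) - Ham J h σ

/-- Metropolis acceptance probability `exp(-β E_y(σ)^+)`. -/
def acc (J : V → V → ℝ) (h : V → ℝ) (β : ℝ) (σ : V → Bool) (y : V) : ℝ :=
  Real.exp (-β * max (Ecost J h y σ) 0)

/-- The Digital Annealer transition matrix. -/
def Pda (J : V → V → ℝ) (h : V → ℝ) (β : ℝ) (σ τ : V → Bool) : ℝ :=
  if τ = σ then ∏ y : V, (1 - acc J h β σ y)
  else ∑ x ∈ Finset.univ.filter (fun x => τ = flipConf σ x),
        ∑ S ∈ Finset.univ.powerset.filter (fun S : Finset V => x ∈ S),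
          ((S.card : ℝ))⁻¹ * (∏ y ∈ S, acc J h β σ y) * ∏ y ∈ Sᶜ, (1 - acc J h β σ y)

/-- The Gibbs distribution at inverse temperature `β`. -/
def gibbs (J : V → V → ℝ) (h : V → ℝ) (β : ℝ) (σ : V → Bool) : ℝ :=
  Real.exp (-β * Ham J h σ) / ∑ τ : V → Bool, Real.exp (-β * Ham J h τ)

/-- The quantity `R(σ, σ^x)` from the paper. -/
def Rw (J : V → V → ℝ) (h : V → ℝ) (β : ℝ) (σ : V → Bool) (x : V) : ℝ :=
  ∑ S ∈ (Finset.univ.erase x).powerset,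
    ((S.card : ℝ) + 1)⁻¹ * (∏ y ∈ S, acc J h β σ y) *
      ∏ y ∈ (Finset.univ.erase x) \ S, (1 - acc J h β σ y)

/-- `τ` is reachable from `σ` at height `E`. -/
def Reachable (H : (V → Bool) → ℝ) (E : ℝ) (σ τ : V → Bool) : Prop :=
  (σ = τ ∧ H σ ≤ E) ∨
    ∃ n : ℕ, 1 ≤ n ∧ ∃ p : ℕ → (V → Bool), p 0 = σ ∧ p n = τ ∧
      (∀ k, 1 ≤ k → k ≤ n → ∃ x, p k = flipConf (p (k - 1)) x) ∧
      (∀ i ≤ n, H (p i) ≤ E)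

/-- `σ` is a local minimum of `H`. -/
def IsLocMin (H : (V → Bool) → ℝ) (σ : V → Bool) : Prop :=
  ¬ ∃ τ, H τ < H σ ∧ Reachable H (H σ) σ τ

/-- `σ` is a ground state (global minimum) of `H`. -/
def IsGround (H : (V → Bool) → ℝ) (σ : V → Bool) : Prop := ∀ τ, H σ ≤ H τ

/-- The depth of a local minimum which is not a ground state: the smallest `E > 0` such
that some strictly lower state is reachable from `σ` at height `H(σ) + E`. -/
def depth (H : (V → Bool) → ℝ) (σ : V → Bool) : ℝ :=
  sInf {E : ℝ | 0 < E ∧ ∃ τ, H τ < H σ ∧ Reachable H (H σ + E) σ τ}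

/-- `γ*`: the maximum of the depths of the local minima of `H` that are not ground
states (`0` if every local minimum is a ground state). -/
def gammaStar (H : (V → Bool) → ℝ) : ℝ :=
  sSup ({0} ∪ {d : ℝ | ∃ σ, IsLocMin H σ ∧ ¬ IsGround H σ ∧ d = depth H σ})

end

lemma Finset.sum_filter_mem_powerset {V M : Type*} [DecidableEq V] [AddCommMonoid M]
    {s : Finset V} {x : V} (hx : x ∈ s) (g : Finset V → M) :
    ∑ S ∈ s.powerset.filter (fun S => x ∈ S), g S = ∑ T ∈ (s.erase x).powerset, g (insert x T) := by
  rw [sum_filter, ← insert_erase hx, sum_powerset_insert (notMem_erase x s),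
    erase_insert_eq_erase, erase_idem]
  have hnot : ∀ T ∈ (s.erase x).powerset, x ∉ T := fun T hT hxT =>
    notMem_erase x s (mem_powerset.1 hT hxT)
  simp [sum_ite_of_false hnot]

section Combinatorics

variable {V : Type*} [Fintype V] [DecidableEq V]

lemma sum_sum_filter_mem_inv_card_mul {K : Type*} [DivisionRing K] [CharZero K]
    (f : Finset V → K) :
    ∑ x, ∑ S ∈ univ.powerset.filter (fun S => x ∈ S), (#S : K)⁻¹ * f S
      = ∑ S, f S - f ∅ := by
  have hcount : ∀ S : Finset V, ∑ x, (if x ∈ S then (#S : K)⁻¹ * f S else 0)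
      = f S - if S = ∅ then f S else 0 := by
    intro S
    rw [sum_ite_mem, univ_inter, sum_const, nsmul_eq_mul, ← mul_assoc]
    split_ifs with hS
    · simp [hS]
    · have hcard : (#S : K) ≠ 0 := by simpa [card_eq_zero] using hS
      rw [mul_inv_cancel₀ hcard, one_mul, sub_zero]
  simp_rw [sum_filter, powerset_univ]
  rw [sum_comm, sum_congr rfl fun S _ => hcount S, sum_sub_distrib, Fintype.sum_ite_eq']

lemma sum_prod_mul_prod_compl_one_sub {R : Type*} [CommRing R] (a : V → R) :
    ∑ S : Finset V, (∏ y ∈ S, a y) * ∏ y ∈ Sᶜ, (1 - a y) = 1 := by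
  simp_rw [compl_eq_univ_sdiff]
  rw [← powerset_univ, ← prod_add]
  simp

end Combinatorics

section SpinFlip

variable {V : Type*} [DecidableEq V]

lemma spin_not (b : Bool) : spin (!b) = -spin b := by cases b <;> simp [spin]

lemma flipConf_apply_self (σ : V → Bool) (x : V) : flipConf σ x x = !σ x :=
  Function.update_self ..

lemma flipConf_apply_of_ne (σ : V → Bool) {x y : V} (hyx : y ≠ x) : flipConf σ x y = σ y :=
  Function.update_of_ne hyx ..

lemma flipConf_flipConf (σ : V → Bool) (x : V) : flipConf (flipConf σ x) x = σ := by
  simp [flipConf]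

lemma flipConf_ne (σ : V → Bool) (x : V) : flipConf σ x ≠ σ := fun h => by
  simpa [flipConf_apply_self] using congrFun h x

lemma flipConf_injective (σ : V → Bool) : Function.Injective (flipConf σ) := by
  intro x y hxy
  by_contra hne
  simpa [flipConf_apply_self, flipConf_apply_of_ne σ hne] using congrFun hxy x

lemma eq_flipConf_comm {σ τ : V → Bool} {x : V} : σ = flipConf τ x ↔ τ = flipConf σ x := by
  constructor <;> rintro rfl <;> rw [flipConf_flipConf]

lemma sum_eq_add_sum_flipConf [Fintype V] {M : Type*} [AddCommMonoid M] (σ : V → Bool)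
    (f : (V → Bool) → M) (hf : ∀ τ, τ ≠ σ → (∀ x, τ ≠ flipConf σ x) → f τ = 0) :
    ∑ τ, f τ = f σ + ∑ x, f (flipConf σ x) := by
  have hσ : σ ∉ univ.image (flipConf σ) := by simpa using fun x => flipConf_ne σ x
  rw [← sum_image fun x _ y _ hxy => flipConf_injective σ hxy, ← sum_insert hσ]
  refine (sum_subset (subset_univ _) fun τ _ hτ => ?_).symm
  simp only [mem_insert, mem_image, mem_univ, true_and, not_or] at hτ
  exact hf τ hτ.1 fun x hx => hτ.2 ⟨x, hx.symm⟩

end SpinFlip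

section Energy

variable {V : Type*} [Fintype V] [DecidableEq V]

lemma Ecost_flipConf_self (J : V → V → ℝ) (h : V → ℝ) (x : V) (σ : V → Bool) :
    Ecost J h x (flipConf σ x) = -Ecost J h x σ := by
  rw [Ecost, Ecost, flipConf_flipConf]
  ring

lemma gibbs_mul_acc_flipConf (J : V → V → ℝ) (h : V → ℝ) (β : ℝ) (σ : V → Bool) (x : V) :
    gibbs J h β (flipConf σ x) * acc J h β (flipConf σ x) x
      = gibbs J h β σ * acc J h β σ x := by
  have hHam : Ham J h (flipConf σ x) = Ham J h σ + Ecost J h x σ := by rw [Ecost]; ring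
  have hpos : max (Ecost J h x σ) 0 = Ecost J h x σ + max (-Ecost J h x σ) 0 :=
    eq_add_of_sub_eq (max_zero_sub_max_neg_zero_eq_self _)
  simp only [gibbs, acc, div_mul_eq_mul_div, ← Real.exp_add, Ecost_flipConf_self, hHam, hpos]
  ring_nf

lemma Ecost_of_no_couplings {J : V → V → ℝ} (hJ : ∀ x y, J x y = 0) (h : V → ℝ) (y : V)
    (σ : V → Bool) : Ecost J h y σ = 2 * h y * spin (σ y) := by
  have hterm : ∀ z ≠ y, h z * spin (σ z) - h z * spin (flipConf σ y z) = 0 := fun z hz => by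
    rw [flipConf_apply_of_ne σ hz, sub_self]
  rw [Ecost, Ham, Ham]
  simp only [hJ, zero_mul, sum_const_zero, mul_zero, zero_sub, neg_sub_neg, ← sum_sub_distrib]
  rw [sum_eq_single y (fun z _ hz => hterm z hz) (by simp), flipConf_apply_self, spin_not]
  ring

lemma acc_flipConf_of_ne {J : V → V → ℝ} (hJ : ∀ x y, J x y = 0) (h : V → ℝ) (β : ℝ)
    (σ : V → Bool) {x y : V} (hyx : y ≠ x) :
    acc J h β (flipConf σ x) y = acc J h β σ y := by
  rw [acc, acc, Ecost_of_no_couplings hJ, Ecost_of_no_couplings hJ, flipConf_apply_of_ne σ hyx]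

lemma Rw_flipConf {J : V → V → ℝ} (hJ : ∀ x y, J x y = 0) (h : V → ℝ) (β : ℝ)
    (σ : V → Bool) (x : V) : Rw J h β (flipConf σ x) x = Rw J h β σ x := by
  have hacc : ∀ y ∈ univ.erase x, acc J h β (flipConf σ x) y = acc J h β σ y :=
    fun y hy => acc_flipConf_of_ne hJ h β σ (ne_of_mem_erase hy)
  refine sum_congr rfl fun S hS => ?_
  have hSx := mem_powerset.1 hS
  rw [prod_congr (f := acc J h β (flipConf σ x)) rfl fun y hy => hacc y (hSx hy),
    prod_congr (f := fun y => 1 - acc J h β (flipConf σ x) y) rfl fun y hy => by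
      rw [hacc y (sdiff_subset hy)]]

end Energy

section Transition

variable {V : Type*} [Fintype V] [DecidableEq V]

lemma Pda_eq_zero_of_ne_flipConf (J : V → V → ℝ) (h : V → ℝ) (β : ℝ) {σ τ : V → Bool}
    (hne : τ ≠ σ) (hflip : ∀ x, τ ≠ flipConf σ x) : Pda J h β σ τ = 0 := by
  rw [Pda, if_neg hne, filter_false_of_mem fun x _ => hflip x, sum_empty]

lemma Pda_flipConf_eq_sum (J : V → V → ℝ) (h : V → ℝ) (β : ℝ) (σ : V → Bool) (x : V) :
    Pda J h β σ (flipConf σ x)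
      = ∑ S ∈ univ.powerset.filter (fun S => x ∈ S),
          (#S : ℝ)⁻¹ * (∏ y ∈ S, acc J h β σ y) * ∏ y ∈ Sᶜ, (1 - acc J h β σ y) := by
  have hx : univ.filter (fun x' => flipConf σ x = flipConf σ x') = {x} := by
    ext x'
    simp [(flipConf_injective σ).eq_iff, eq_comm]
  rw [Pda, if_neg (flipConf_ne σ x), hx, sum_singleton]

lemma Pda_flipConf (J : V → V → ℝ) (h : V → ℝ) (β : ℝ) (σ : V → Bool) (x : V) :
    Pda J h β σ (flipConf σ x) = acc J h β σ x * Rw J h β σ x := by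
  rw [Pda_flipConf_eq_sum, sum_filter_mem_powerset (mem_univ x), Rw, mul_sum]
  refine sum_congr rfl fun T hT => ?_
  have hxT : x ∉ T := fun hxT => notMem_erase x univ (mem_powerset.1 hT hxT)
  have hcompl : (insert x T)ᶜ = univ.erase x \ T := by
    ext y
    simp [and_comm]
  rw [card_insert_of_notMem hxT, prod_insert hxT, hcompl]
  push_cast
  ring

lemma Pda_self_add_sum_Pda_flipConf (J : V → V → ℝ) (h : V → ℝ) (β : ℝ) (σ : V → Bool) :
    Pda J h β σ σ + ∑ x, Pda J h β σ (flipConf σ x) = 1 := by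
  simp_rw [Pda_flipConf_eq_sum, mul_assoc]
  rw [sum_sum_filter_mem_inv_card_mul, sum_prod_mul_prod_compl_one_sub, Pda, if_pos rfl]
  simp

lemma gibbs_mul_Pda_flipConf {J : V → V → ℝ} (hJ : ∀ x y, J x y = 0) (h : V → ℝ) (β : ℝ)
    (σ : V → Bool) (x : V) :
    gibbs J h β (flipConf σ x) * Pda J h β (flipConf σ x) σ
      = gibbs J h β σ * Pda J h β σ (flipConf σ x) := by
  have hback := Pda_flipConf J h β (flipConf σ x) x
  rw [flipConf_flipConf] at hback
  rw [hback, Pda_flipConf, Rw_flipConf hJ, ← mul_assoc, gibbs_mul_acc_flipConf, mul_assoc]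

end Transition

theorem gibbs_stationary_of_no_couplings_general
    {V : Type*} [Fintype V] [DecidableEq V]
    (J : V → V → ℝ) (h : V → ℝ) (hJ : ∀ x y, J x y = 0)
    (β : ℝ) (σ : V → Bool) :
    ∑ τ : V → Bool, gibbs J h β τ * Pda J h β τ σ = gibbs J h β σ := by
  have hsupport : ∀ τ, τ ≠ σ → (∀ x, τ ≠ flipConf σ x) → gibbs J h β τ * Pda J h β τ σ = 0 :=
    fun τ hne hflip => by
      rw [Pda_eq_zero_of_ne_flipConf J h β (Ne.symm hne)
        fun x hx => hflip x (eq_flipConf_comm.1 hx), mul_zero]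
  calc ∑ τ, gibbs J h β τ * Pda J h β τ σ
      = gibbs J h β σ * Pda J h β σ σ
          + ∑ x, gibbs J h β (flipConf σ x) * Pda J h β (flipConf σ x) σ :=
        sum_eq_add_sum_flipConf σ _ hsupport
    _ = gibbs J h β σ * (Pda J h β σ σ + ∑ x, Pda J h β σ (flipConf σ x)) := by
        simp_rw [gibbs_mul_Pda_flipConf hJ, mul_add, mul_sum]
    _ = gibbs J h β σ := by rw [Pda_self_add_sum_Pda_flipConf, mul_one]

theorem gibbs_stationary_of_no_couplings
    {V : Type*} [Fintype V] [DecidableEq V] [Nonempty V]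
    (J : V → V → ℝ) (h : V → ℝ) (hJ : ∀ x y, J x y = 0)
    (β : ℝ) (hβ : 0 < β) (σ : V → Bool) :
    ∑ τ : V → Bool, gibbs J h β τ * Pda J h β τ σ = gibbs J h β σ :=
  gibbs_stationary_of_no_couplings_general J h hJ β σ
end

section
/- Assume h_x = 0 for all x and J_{x,y} ≥ 0 for all x, y ∈ V, and let σ ∈ Ω be a constant configuration (σ_y = σ_z for all y, z ∈ V). Then for every β > 0 and every x ∈ V, R(σ, σ^x) ≥ R(σ^x, σ); moreover, if there exists w ∈ V with J_{x,w} > 0, then the inequality is strict: R(σ, σ^x) > R(σ^x, σ). -/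
open Finset Filter
open scoped Classical

section AuxRw

open Finset

variable {V : Type*} [Fintype V] [DecidableEq V]

/-- Auxiliary generalized sum: `Rw` with a shifted weight `(|S|+k)⁻¹`. -/
noncomputable def Faux (k : ℕ) (T : Finset V) (a : V → ℝ) : ℝ :=
  ∑ S ∈ T.powerset, ((S.card : ℝ) + k)⁻¹ * (∏ y ∈ S, a y) * ∏ y ∈ T \ S, (1 - a y)

lemma Faux_peel (k : ℕ) {T : Finset V} {z : V} (hz : z ∉ T) (a : V → ℝ) :
    Faux k (insert z T) a
      = a z * Faux (k + 1) T a + (1 - a z) * Faux k T a := by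
  unfold Faux
  rw [Finset.sum_powerset_insert hz]
  rw [Finset.mul_sum, Finset.mul_sum, add_comm]
  congr 1
  · apply Finset.sum_congr rfl
    intro S hS
    rw [Finset.mem_powerset] at hS
    have hzS : z ∉ S := fun h => hz (hS h)
    rw [Finset.insert_sdiff_insert, Finset.prod_insert hzS,
      Finset.card_insert_of_notMem hzS]
    have : T \ insert z S = T \ S := by
      rw [Finset.sdiff_insert, Finset.erase_eq_of_notMem]
      simp [hz]
    rw [this]
    push_cast
    ring
  · apply Finset.sum_congr rfl
    intro S hS
    rw [Finset.mem_powerset] at hS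
    have hzS : z ∉ S := fun h => hz (hS h)
    rw [Finset.insert_sdiff_of_notMem _ hzS, Finset.prod_insert]
    · ring
    · simp [hzS, hz, fun h => hz (hS h)]

lemma Faux_empty (k : ℕ) (a : V → ℝ) : Faux k (∅ : Finset V) a = (k : ℝ)⁻¹ := by
  simp [Faux]

lemma Faux_succ_le (k : ℕ) (hk : 1 ≤ k) (T : Finset V) (a : V → ℝ)
    (ha : ∀ y ∈ T, 0 ≤ a y ∧ a y ≤ 1) :
    Faux (k + 1) T a ≤ Faux k T a := by
  unfold Faux
  apply Finset.sum_le_sum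
  intro S hS
  rw [Finset.mem_powerset] at hS
  have hP : 0 ≤ ∏ y ∈ S, a y :=
    Finset.prod_nonneg fun y hy => (ha y (hS hy)).1
  have hQ : 0 ≤ ∏ y ∈ T \ S, (1 - a y) :=
    Finset.prod_nonneg fun y hy => by
      have := (ha y (Finset.mem_sdiff.mp hy).1).2; linarith
  have h1 : (0:ℝ) < (S.card : ℝ) + k := by
    have : (1:ℝ) ≤ (k:ℝ) := by exact_mod_cast hk
    positivity
  have h2 : ((S.card : ℝ) + (k+1:ℕ))⁻¹ ≤ ((S.card : ℝ) + k)⁻¹ := by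
    apply inv_anti₀ h1
    push_cast; linarith
  have := mul_le_mul_of_nonneg_right (mul_le_mul_of_nonneg_right h2 hP) hQ
  linarith

lemma Faux_antitone (T : Finset V) : ∀ (k : ℕ), 1 ≤ k → ∀ (a b : V → ℝ),
    (∀ y ∈ T, 0 ≤ a y ∧ a y ≤ b y ∧ b y ≤ 1) → Faux k T b ≤ Faux k T a := by
  induction T using Finset.induction_on with
  | empty => intro k hk a b _; simp [Faux_empty]
  | @insert z T hz ih =>
    intro k hk a b hab
    have hmemz := hab z (Finset.mem_insert_self z T)
    have hab' : ∀ y ∈ T, 0 ≤ a y ∧ a y ≤ b y ∧ b y ≤ 1 :=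
      fun y hy => hab y (Finset.mem_insert_of_mem hy)
    have ha' : ∀ y ∈ T, 0 ≤ a y ∧ a y ≤ 1 := fun y hy => by
      have := hab' y hy; exact ⟨this.1, le_trans this.2.1 this.2.2⟩
    rw [Faux_peel k hz, Faux_peel k hz]
    have h1 : Faux (k+1) T b ≤ Faux (k+1) T a := ih (k+1) (by omega) a b hab'
    have h2 : Faux k T b ≤ Faux k T a := ih k hk a b hab'
    have h3 : Faux (k+1) T a ≤ Faux k T a := Faux_succ_le k hk T a ha'
    have h0a : 0 ≤ a z := hmemz.1
    have hab2 : a z ≤ b z := hmemz.2.1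
    have hb1 : b z ≤ 1 := hmemz.2.2
    nlinarith [h1, h2, h3, h0a, hab2, hb1]

lemma Faux_succ_lt (k : ℕ) (hk : 1 ≤ k) (T : Finset V) (a : V → ℝ)
    (ha : ∀ y ∈ T, 0 < a y ∧ a y ≤ 1) :
    Faux (k + 1) T a < Faux k T a := by
  have key : 0 < Faux k T a - Faux (k + 1) T a := by
    unfold Faux
    rw [← Finset.sum_sub_distrib]
    apply Finset.sum_pos'
    · intro S hS
      rw [Finset.mem_powerset] at hS
      have hP : 0 ≤ ∏ y ∈ S, a y :=
        Finset.prod_nonneg fun y hy => (ha y (hS hy)).1.le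
      have hQ : 0 ≤ ∏ y ∈ T \ S, (1 - a y) :=
        Finset.prod_nonneg fun y hy => by
          have := (ha y (Finset.mem_sdiff.mp hy).1).2; linarith
      have h1 : (0:ℝ) < (S.card : ℝ) + k := by
        have : (1:ℝ) ≤ (k:ℝ) := by exact_mod_cast hk
        positivity
      have h2 : ((S.card : ℝ) + (k+1:ℕ))⁻¹ ≤ ((S.card : ℝ) + k)⁻¹ := by
        apply inv_anti₀ h1
        push_cast; linarith
      nlinarith [mul_le_mul_of_nonneg_right (mul_le_mul_of_nonneg_right h2 hP) hQ]
    · refine ⟨T, Finset.mem_powerset_self T, ?_⟩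
      have hP : 0 < ∏ y ∈ T, a y := Finset.prod_pos fun y hy => (ha y hy).1
      have hQ : ∏ y ∈ T \ T, (1 - a y) = 1 := by simp
      rw [hQ]
      have h1 : (0:ℝ) < (T.card : ℝ) + k := by
        have : (1:ℝ) ≤ (k:ℝ) := by exact_mod_cast hk
        positivity
      have h2 : ((T.card : ℝ) + (k+1:ℕ))⁻¹ < ((T.card : ℝ) + k)⁻¹ := by
        apply inv_strictAnti₀ h1
        push_cast; linarith
      nlinarith
  linarith

lemma Faux_strict (T : Finset V) (k : ℕ) (hk : 1 ≤ k) {z : V} (hzT : z ∈ T)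
    (a b : V → ℝ) (hab : ∀ y ∈ T, 0 < a y ∧ a y ≤ b y ∧ b y ≤ 1)
    (hstrict : a z < b z) : Faux k T b < Faux k T a := by
  have hT : T = insert z (T.erase z) := (Finset.insert_erase hzT).symm
  have hz' : z ∉ T.erase z := Finset.notMem_erase z T
  have hab' : ∀ y ∈ T.erase z, 0 < a y ∧ a y ≤ b y ∧ b y ≤ 1 :=
    fun y hy => hab y (Finset.mem_of_mem_erase hy)
  have hmemz := hab z hzT
  rw [hT, Faux_peel k hz', Faux_peel k hz']
  have h1 : Faux (k+1) (T.erase z) b ≤ Faux (k+1) (T.erase z) a :=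
    Faux_antitone _ (k+1) (by omega) a b
      (fun y hy => ⟨(hab' y hy).1.le, (hab' y hy).2⟩)
  have h2 : Faux k (T.erase z) b ≤ Faux k (T.erase z) a :=
    Faux_antitone _ k hk a b (fun y hy => ⟨(hab' y hy).1.le, (hab' y hy).2⟩)
  have h3 : Faux (k+1) (T.erase z) a < Faux k (T.erase z) a :=
    Faux_succ_lt k hk _ a
      (fun y hy => ⟨(hab' y hy).1, le_trans (hab' y hy).2.1 (hab' y hy).2.2⟩)
  have h0a : 0 < a z := hmemz.1
  have hb1 : b z ≤ 1 := hmemz.2.2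
  nlinarith [h1, h2, h3, h0a, hb1, hstrict]

lemma spin_flip_aux (τ : V → Bool) (y v : V) :
    spin (flipConf τ y v) = spin (τ v) - (if v = y then 2 * spin (τ y) else 0) := by
  by_cases h : v = y
  · subst h; simp only [flipConf, Function.update_self, if_pos rfl]
    cases τ v <;> simp [spin] <;> norm_num
  · simp [flipConf, Function.update, h]

lemma sum_spin_flip (τ : V → Bool) (y : V) (g : V → ℝ) :
    ∑ v, g v * spin (flipConf τ y v)
      = (∑ v, g v * spin (τ v)) - 2 * g y * spin (τ y) := by
  have : ∀ v, g v * spin (flipConf τ y v)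
      = g v * spin (τ v) - (if v = y then 2 * g y * spin (τ y) else 0) := by
    intro v
    rw [spin_flip_aux]
    by_cases h : v = y <;> simp [h] <;> ring
  rw [Finset.sum_congr rfl (fun v _ => this v), Finset.sum_sub_distrib,
    Finset.sum_ite_eq' Finset.univ y]
  simp

lemma Ecost_formula (J : V → V → ℝ) (hsym : ∀ u v, J u v = J v u)
    (hdiag : ∀ u, J u u = 0) (y : V) (τ : V → Bool) :
    Ecost J (fun _ => 0) y τ = 2 * spin (τ y) * ∑ v, J y v * spin (τ v) := by
  set f := flipConf τ y with hfdef
  set t := fun u => ∑ v, J u v * spin (τ v) with ht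
  have hrow : ∀ u, ∑ v, J u v * spin (f u) * spin (f v)
      = t u * spin (f u) - 2 * J u y * spin (τ y) * spin (f u) := by
    intro u
    have h1 := sum_spin_flip τ y (fun v => J u v * spin (f u))
    rw [hfdef] at h1 ⊢
    rw [h1]
    have h2 : ∑ v, J u v * spin (flipConf τ y u) * spin (τ v)
        = spin (flipConf τ y u) * t u := by
      simp only [ht]; rw [Finset.mul_sum]
      exact Finset.sum_congr rfl fun v _ => by ring
    rw [h2]; ring
  have hA' : ∑ u, ∑ v, J u v * spin (f u) * spin (f v)
      = (∑ u, ∑ v, J u v * spin (τ u) * spin (τ v)) - 4 * spin (τ y) * t y := by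
    rw [Finset.sum_congr rfl fun u _ => hrow u, Finset.sum_sub_distrib]
    have h3 : ∑ u, t u * spin (f u) = (∑ u, t u * spin (τ u)) - 2 * t y * spin (τ y) :=
      sum_spin_flip τ y t
    have h4 : ∑ u, 2 * J u y * spin (τ y) * spin (f u)
        = (∑ u, 2 * J u y * spin (τ y) * spin (τ u))
          - 2 * (2 * J y y * spin (τ y)) * spin (τ y) :=
      sum_spin_flip τ y (fun u => 2 * J u y * spin (τ y))
    rw [h3, h4, hdiag y]
    have h5 : ∑ u, 2 * J u y * spin (τ y) * spin (τ u) = 2 * spin (τ y) * t y := by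
      simp only [ht]; rw [Finset.mul_sum]
      exact Finset.sum_congr rfl fun u _ => by rw [hsym u y]; ring
    have h6 : ∑ u, t u * spin (τ u) = ∑ u, ∑ v, J u v * spin (τ u) * spin (τ v) := by
      apply Finset.sum_congr rfl
      intro u _
      simp only [ht]; rw [Finset.sum_mul]
      exact Finset.sum_congr rfl fun v _ => by ring
    rw [h5, h6]; ring
  unfold Ecost Ham
  simp only [zero_mul, Finset.sum_const_zero, sub_zero]
  rw [← hfdef, hA']
  ring

lemma spin_mul_self (b : Bool) : spin b * spin b = 1 := by
  cases b <;> simp [spin]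

lemma Rw_eq_Faux (J : V → V → ℝ) (h : V → ℝ) (β : ℝ) (τ : V → Bool) (x : V) :
    Rw J h β τ x = Faux 1 (Finset.univ.erase x) (acc J h β τ) := by
  unfold Rw Faux
  apply Finset.sum_congr rfl
  intro S _
  norm_num

end AuxRw

theorem Rw_ge_of_constant_config
    {V : Type*} [Fintype V] [DecidableEq V] (hcard : 1 < Fintype.card V)
    (J : V → V → ℝ)
    (hJsymm : ∀ x y, J x y = J y x) (hJdiag : ∀ x, J x x = 0)
    (hJnonneg : ∀ x y, 0 ≤ J x y)
    (σ : V → Bool) (hconst : ∀ y z, σ y = σ z)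
    (β : ℝ) (hβ : 0 < β) (x : V) :
    Rw J (fun _ => 0) β (flipConf σ x) x ≤ Rw J (fun _ => 0) β σ x ∧
      ((∃ w, 0 < J x w) →
        Rw J (fun _ => 0) β (flipConf σ x) x < Rw J (fun _ => 0) β σ x) := by
  classical
  set T : Finset V := Finset.univ.erase x with hT
  set a : V → ℝ := acc J (fun _ => 0) β σ with ha
  set b : V → ℝ := acc J (fun _ => 0) β (flipConf σ x) with hb
  have hrow_nonneg : ∀ y : V, 0 ≤ ∑ v, J y v :=
    fun y => Finset.sum_nonneg fun v _ => hJnonneg y v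
  -- energy costs
  have hEσ : ∀ y : V, Ecost J (fun _ => 0) y σ = 2 * ∑ v, J y v := by
    intro y
    rw [Ecost_formula J hJsymm hJdiag]
    have h1 : ∑ v, J y v * spin (σ v) = (∑ v, J y v) * spin (σ y) := by
      rw [Finset.sum_mul]
      exact Finset.sum_congr rfl fun v _ => by rw [hconst v y]
    rw [h1]
    have hs := spin_mul_self (σ y)
    have : 2 * spin (σ y) * ((∑ v, J y v) * spin (σ y))
        = 2 * (∑ v, J y v) * (spin (σ y) * spin (σ y)) := by ring
    rw [this, hs]; ring
  have hEflip : ∀ y : V, y ≠ x →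
      Ecost J (fun _ => 0) y (flipConf σ x) = 2 * ((∑ v, J y v) - 2 * J y x) := by
    intro y hyx
    rw [Ecost_formula J hJsymm hJdiag]
    have hspin_y : spin (flipConf σ x y) = spin (σ y) := by
      simp [flipConf, Function.update, hyx]
    have h1 : ∑ v, J y v * spin (flipConf σ x v)
        = (∑ v, J y v * spin (σ v)) - 2 * J y x * spin (σ x) :=
      sum_spin_flip σ x (fun v => J y v)
    have h2 : ∑ v, J y v * spin (σ v) = (∑ v, J y v) * spin (σ y) := by
      rw [Finset.sum_mul]
      exact Finset.sum_congr rfl fun v _ => by rw [hconst v y]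
    have h3 : spin (σ x) = spin (σ y) := by rw [hconst x y]
    rw [hspin_y, h1, h2, h3]
    have hs := spin_mul_self (σ y)
    have : 2 * spin (σ y) * ((∑ v, J y v) * spin (σ y) - 2 * J y x * spin (σ y))
        = 2 * ((∑ v, J y v) - 2 * J y x) * (spin (σ y) * spin (σ y)) := by ring
    rw [this, hs]; ring
  -- acceptance probability comparisons
  have hab : ∀ y ∈ T, 0 < a y ∧ a y ≤ b y ∧ b y ≤ 1 := by
    intro y hy
    have hyx : y ≠ x := (Finset.mem_erase.mp hy).1
    refine ⟨Real.exp_pos _, ?_, ?_⟩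
    · rw [ha, hb]
      unfold acc
      apply Real.exp_le_exp.mpr
      have hmax : max (Ecost J (fun _ => 0) y (flipConf σ x)) 0
          ≤ max (Ecost J (fun _ => 0) y σ) 0 := by
        rw [hEσ y, hEflip y hyx]
        have hJ := hJnonneg y x
        have hR := hrow_nonneg y
        apply max_le
        · calc 2 * ((∑ v, J y v) - 2 * J y x) ≤ 2 * ∑ v, J y v := by linarith
            _ ≤ max (2 * ∑ v, J y v) 0 := le_max_left _ _
        · exact le_max_right _ _
      nlinarith [hmax]
    · rw [hb]
      unfold acc
      rw [Real.exp_le_one_iff]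
      have : (0:ℝ) ≤ max (Ecost J (fun _ => 0) y (flipConf σ x)) 0 := le_max_right _ _
      nlinarith [this]
  constructor
  · rw [Rw_eq_Faux, Rw_eq_Faux, ← hT, ← ha, ← hb]
    exact Faux_antitone T 1 le_rfl a b
      (fun y hy => ⟨(hab y hy).1.le, (hab y hy).2⟩)
  · rintro ⟨w, hw⟩
    have hwx : w ≠ x := by
      intro h; rw [h] at hw; rw [hJdiag x] at hw; exact lt_irrefl 0 hw
    have hwT : w ∈ T := Finset.mem_erase.mpr ⟨hwx, Finset.mem_univ w⟩
    have hJwx : 0 < J w x := by rw [hJsymm w x]; exact hw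
    have hrow_w : J w x ≤ ∑ v, J w v :=
      Finset.single_le_sum (fun v _ => hJnonneg w v) (Finset.mem_univ x)
    have hstrict : a w < b w := by
      rw [ha, hb]
      unfold acc
      apply Real.exp_lt_exp.mpr
      have hmax : max (Ecost J (fun _ => 0) w (flipConf σ x)) 0
          < max (Ecost J (fun _ => 0) w σ) 0 := by
        rw [hEσ w, hEflip w hwx]
        have h2R : 0 < 2 * ∑ v, J w v := by linarith
        have hmr : max (2 * ∑ v, J w v) 0 = 2 * ∑ v, J w v := max_eq_left h2R.le
        rw [hmr]
        apply max_lt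
        · linarith
        · exact h2R
      nlinarith [hmax]
    rw [Rw_eq_Faux, Rw_eq_Faux, ← hT, ← ha, ← hb]
    exact Faux_strict T 1 le_rfl hwT a b hab hstrict
end
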